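/- arXiv:2301.05677 — 2 statements merged into one kernel-verified Lean document; each statement's English description precedes it below -/
import Mathlib

section
/- Let an auction order book be given with an auction price p_a, auction volume Q_a = min(S(p_a), D(p_a)), and a matching at (p_a, Q_a). Set q_S^(0) = V_S^M(p_a) + V_B^R(p_a). Then for every natural number q with 0 ≤ q ≤ q_S^(0) and every price p, min(S(p) + q, D(p)) ≤ min(S(p_a) + q, D(p_a)); that is, after submitting a sell market order of size at most q_S^(0), the original auction price p_a still maximizes the exchanged volume (zero price impact). Moreover the maximal exchanged volume after the submission equals Q_a + min(V_S^R(p_a) + q, V_B^R(p_a)). -/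
/-!
Every sell order strictly below `pa` and none strictly above it is matched, so
`S(pa) + V_S^M(pa) = Q_a + V_S(pa)` and `S(p) + V_S^M(pa) ≤ Q_a` for `p < pa`; dually
`D(pa) + V_B^M(pa) = Q_a + V_B(pa)` and `D(p) + V_B^M(pa) ≤ Q_a` for `p > pa`. Hence for `p < pa`
the shifted supply `S(p) + q` stays below `D(pa)` as long as `q ≤ V_S^M(pa) + V_B^R(pa)`, while for
`p > pa` the demand is already at most `Q_a`; everything else is arithmetic in `ℕ`.
-/

open Set Function

theorem finsum_mem_le_finsum_mem_of_subset {ι M : Type*} [AddCommMonoid M] [PartialOrder M]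
    [CanonicallyOrderedAdd M] {f : ι → M} (hf : (support f).Finite)
    {s t : Set ι} (hst : s ⊆ t) : ∑ᶠ i ∈ s, f i ≤ ∑ᶠ i ∈ t, f i := by
  rw [← union_sdiff_cancel hst, finsum_mem_union' disjoint_sdiff_right (hf.inter_of_right _)
    (hf.inter_of_right _)]
  exact le_self_add

theorem finsum_mem_Iic_eq_add_finsum_mem_Iio {α M : Type*} [LinearOrder α] [AddCommMonoid M]
    {f : α → M} (hf : (support f).Finite) (a : α) :
    ∑ᶠ p ∈ Iic a, f p = f a + ∑ᶠ p ∈ Iio a, f p := by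
  rw [← Iio_insert, finsum_mem_insert' f self_notMem_Iio (hf.inter_of_right _)]

section Matching

variable {α : Type*} [LinearOrder α] {V Vm : α → ℕ} {a : α}

/-- The sell side of a matching at price `a`; the buy side is the same condition read on `αᵒᵈ`. -/
structure IsSellMatching (V Vm : α → ℕ) (a : α) : Prop where
  le : ∀ p, Vm p ≤ V p
  eq_of_lt : ∀ p < a, Vm p = V p
  eq_zero_of_gt : ∀ p, a < p → Vm p = 0

namespace IsSellMatching

theorem finsum_eq (h : IsSellMatching V Vm a) (hV : (support V).Finite) :
    ∑ᶠ p, Vm p = Vm a + ∑ᶠ p ∈ Iio a, V p := by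
  have hVm : (support Vm).Finite :=
    hV.subset fun p hp hVp ↦ hp (Nat.eq_zero_of_le_zero (hVp ▸ h.le p))
  calc ∑ᶠ p, Vm p = ∑ᶠ p ∈ Iic a, Vm p := by
        rw [← finsum_mem_univ]
        refine finsum_mem_inter_support_eq' _ _ _ fun p hp ↦ ?_
        simp only [mem_univ, mem_Iic, true_iff]
        exact not_lt.mp fun hap ↦ hp (h.eq_zero_of_gt p hap)
    _ = Vm a + ∑ᶠ p ∈ Iio a, V p := by
        rw [finsum_mem_Iic_eq_add_finsum_mem_Iio hVm]
        exact congrArg _ (finsum_mem_congr rfl h.eq_of_lt)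

theorem finsum_mem_Iic_add_eq (h : IsSellMatching V Vm a) (hV : (support V).Finite) :
    ∑ᶠ p ∈ Iic a, V p + Vm a = ∑ᶠ p, Vm p + V a := by
  rw [h.finsum_eq hV, finsum_mem_Iic_eq_add_finsum_mem_Iio hV]
  ring

theorem finsum_mem_Iic_add_le_of_lt (h : IsSellMatching V Vm a) (hV : (support V).Finite)
    {p : α} (hp : p < a) :
    ∑ᶠ p' ∈ Iic p, V p' + Vm a ≤ ∑ᶠ p, Vm p := by
  rw [h.finsum_eq hV, add_comm]
  gcongr
  exact finsum_mem_le_finsum_mem_of_subset hV (Iic_subset_Iio.mpr hp)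

end IsSellMatching

end Matching

theorem sell_order_zero_impact_general
    (VB VS VBM VSM : ℝ → ℕ)
    (hVB : (Function.support VB).Finite)
    (hVS : (Function.support VS).Finite)
    (S D : ℝ → ℕ)
    (hS : ∀ p : ℝ, S p = ∑ᶠ p' ∈ {p' : ℝ | p' ≤ p}, VS p')
    (hD : ∀ p : ℝ, D p = ∑ᶠ p' ∈ {p' : ℝ | p ≤ p'}, VB p')
    (pa : ℝ) (Qa : ℕ)
    (hBMle : ∀ p : ℝ, VBM p ≤ VB p)
    (hSMle : ∀ p : ℝ, VSM p ≤ VS p)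
    (hBMabove : ∀ p : ℝ, pa < p → VBM p = VB p)
    (hBMbelow : ∀ p : ℝ, p < pa → VBM p = 0)
    (hSMbelow : ∀ p : ℝ, p < pa → VSM p = VS p)
    (hSMabove : ∀ p : ℝ, pa < p → VSM p = 0)
    (hBMsum : (∑ᶠ p : ℝ, VBM p) = Qa)
    (hSMsum : (∑ᶠ p : ℝ, VSM p) = Qa) :
    ∀ q : ℕ, q ≤ VSM pa + (VB pa - VBM pa) →
      (∀ p : ℝ, min (S p + q) (D p) ≤ min (S pa + q) (D pa)) ∧
      min (S pa + q) (D pa) = Qa + min ((VS pa - VSM pa) + q) (VB pa - VBM pa) := by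
  intro q hq
  have hsell : IsSellMatching VS VSM pa := ⟨hSMle, hSMbelow, hSMabove⟩
  have hbuy : IsSellMatching (α := ℝᵒᵈ) VB VBM pa := ⟨hBMle, hBMabove, hBMbelow⟩
  have hSpa : S pa + VSM pa = Qa + VS pa := by
    rw [hS, ← hSMsum]; exact hsell.finsum_mem_Iic_add_eq hVS
  have hDpa : D pa + VBM pa = Qa + VB pa := by
    rw [hD, ← hBMsum]; exact hbuy.finsum_mem_Iic_add_eq hVB
  have hSMpa := hSMle pa
  have hBMpa := hBMle pa
  refine ⟨fun p ↦ ?_, by omega⟩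
  rcases lt_trichotomy p pa with hp | rfl | hp
  · have hSp : S p + VSM pa ≤ Qa := by
      rw [hS, ← hSMsum]; exact hsell.finsum_mem_Iic_add_le_of_lt hVS hp
    omega
  · exact le_rfl
  · have hDp : D p + VBM pa ≤ Qa := by
      rw [hD, ← hBMsum]; exact hbuy.finsum_mem_Iic_add_le_of_lt hVB hp
    omega

/-- Submitting a sell market order of size
`q ≤ q_S^(0) = V_S^M(pa) + V_B^R(pa)` just before the clearing (replacing the
supply `S` by `S + q`) has zero price impact: `pa` still maximizes the
exchanged volume, and the new maximal exchanged volume is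
`Qa + min (V_S^R(pa) + q) (V_B^R(pa))`. -/
theorem sell_order_zero_impact
    (VB VS VBM VSM : ℝ → ℕ)
    (hVB : (Function.support VB).Finite)
    (hVS : (Function.support VS).Finite)
    (S D : ℝ → ℕ)
    (hS : ∀ p : ℝ, S p = ∑ᶠ p' ∈ {p' : ℝ | p' ≤ p}, VS p')
    (hD : ∀ p : ℝ, D p = ∑ᶠ p' ∈ {p' : ℝ | p ≤ p'}, VB p')
    (pa : ℝ) (Qa : ℕ)
    (hmax : ∀ p : ℝ, min (S p) (D p) ≤ min (S pa) (D pa))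
    (hQa : Qa = min (S pa) (D pa))
    (hBMle : ∀ p : ℝ, VBM p ≤ VB p)
    (hSMle : ∀ p : ℝ, VSM p ≤ VS p)
    (hBMabove : ∀ p : ℝ, pa < p → VBM p = VB p)
    (hBMbelow : ∀ p : ℝ, p < pa → VBM p = 0)
    (hSMbelow : ∀ p : ℝ, p < pa → VSM p = VS p)
    (hSMabove : ∀ p : ℝ, pa < p → VSM p = 0)
    (hBMsum : (∑ᶠ p : ℝ, VBM p) = Qa)
    (hSMsum : (∑ᶠ p : ℝ, VSM p) = Qa) :
    ∀ q : ℕ, q ≤ VSM pa + (VB pa - VBM pa) →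
      (∀ p : ℝ, min (S p + q) (D p) ≤ min (S pa + q) (D pa)) ∧
      min (S pa + q) (D pa) = Qa + min ((VS pa - VSM pa) + q) (VB pa - VBM pa) :=
  sell_order_zero_impact_general VB VS VBM VSM hVB hVS S D hS hD pa Qa hBMle hSMle hBMabove hBMbelow
    hSMbelow hSMabove hBMsum hSMsum
end

section
/- Let an auction order book be given with an auction price p_a, auction volume Q_a = min(S(p_a), D(p_a)), and a matching at (p_a, Q_a). Let p_B^(1) < p_B^(2) < … be the successive prices strictly greater than p_a carrying positive posted volume, and define q_B^(0) = V_S^R(p_a) + V_B^M(p_a) and, for i ≥ 1, q_B^(i) = q_B^(i−1) + V_S(p_B^(i)) + V_B(p_B^(i)). Then for every i ≥ 1 such that p_B^(i) exists and every natural number q with q_B^(i−1) ≤ q ≤ q_B^(i), the price p_B^(i) maximizes p ↦ min(S(p), D(p) + q) over all prices; that is, after a buy market order of size q with q_B^(i−1) ≤ q ≤ q_B^(i), the new auction price is p_B^(i). -/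
/-!
Write `S⁻(P)` for the supply strictly below `P` and `D⁺(P)` for the demand strictly above `P`.
Summing the matched volumes, the matching gives `D⁺(p_a) + q_B^(0) = S(p_a)`. Nothing is posted
strictly between consecutive prices `p_B^(k)`, so this balance propagates along them:
`D(p_B^(i)) + q_B^(i-1) = S⁻(p_B^(i))` and `D⁺(p_B^(i)) + q_B^(i) = S(p_B^(i))`. Hence for
`q_B^(i-1) ≤ q ≤ q_B^(i)` the supply curve below `p_B^(i)` stays under `D + q` at `p_B^(i)`, and
`D + q` above `p_B^(i)` stays under the supply at `p_B^(i)`: the two curves cross at `p_B^(i)`,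
which therefore maximizes `min (S p) (D p + q)`.
-/

open Set

section IntervalSums

variable {α M : Type*} [LinearOrder α] [AddCommMonoid M] {f : α → M}

theorem finsum_mem_Iic_eq_finsum_mem_Iio_add (hf : (Function.support f).Finite) (a : α) :
    ∑ᶠ x ∈ Iic a, f x = ∑ᶠ x ∈ Iio a, f x + f a := by
  rw [← Iio_insert, finsum_mem_insert' f self_notMem_Iio (hf.inter_of_right _), add_comm]

theorem finsum_mem_Ici_eq_add_finsum_mem_Ioi (hf : (Function.support f).Finite) (a : α) :
    ∑ᶠ x ∈ Ici a, f x = f a + ∑ᶠ x ∈ Ioi a, f x := by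
  rw [← Ioi_insert, finsum_mem_insert' f self_notMem_Ioi (hf.inter_of_right _)]

theorem finsum_mem_Iio_eq_finsum_mem_Iic_add (hf : (Function.support f).Finite) {a b : α}
    (hab : a < b) :
    ∑ᶠ x ∈ Iio b, f x = ∑ᶠ x ∈ Iic a, f x + ∑ᶠ x ∈ Ioo a b, f x := by
  rw [← Iic_union_Ioo_eq_Iio hab]
  exact finsum_mem_union' ((Iic_disjoint_Ioi le_rfl).mono_right Ioo_subset_Ioi_self)
    (hf.inter_of_right _) (hf.inter_of_right _)

theorem finsum_mem_Ioi_eq_finsum_mem_Ioo_add (hf : (Function.support f).Finite) {a b : α}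
    (hab : a < b) :
    ∑ᶠ x ∈ Ioi a, f x = ∑ᶠ x ∈ Ioo a b, f x + ∑ᶠ x ∈ Ici b, f x := by
  rw [← Ioo_union_Ici_eq_Ioi hab]
  exact finsum_mem_union' ((Iio_disjoint_Ici le_rfl).mono_left Ioo_subset_Iio_self)
    (hf.inter_of_right _) (hf.inter_of_right _)

theorem finsum_eq_finsum_mem_Iio_add_add_finsum_mem_Ioi (hf : (Function.support f).Finite)
    (a : α) : ∑ᶠ x, f x = ∑ᶠ x ∈ Iio a, f x + f a + ∑ᶠ x ∈ Ioi a, f x := by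
  rw [← finsum_mem_univ, ← Iic_union_Ioi (a := a),
    finsum_mem_union' (Iic_disjoint_Ioi le_rfl) (hf.inter_of_right _) (hf.inter_of_right _),
    finsum_mem_Iic_eq_finsum_mem_Iio_add hf]

theorem finsum_mem_Iio_eq_finsum_mem_Iic_of_Ioo (hf : (Function.support f).Finite) {a b : α}
    (hab : a < b) (h0 : ∀ x ∈ Ioo a b, f x = 0) :
    ∑ᶠ x ∈ Iio b, f x = ∑ᶠ x ∈ Iic a, f x := by
  rw [finsum_mem_Iio_eq_finsum_mem_Iic_add hf hab, finsum_mem_eq_zero_of_forall_eq_zero h0,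
    add_zero]

theorem finsum_mem_Ici_eq_finsum_mem_Ioi_of_Ioo (hf : (Function.support f).Finite) {a b : α}
    (hab : a < b) (h0 : ∀ x ∈ Ioo a b, f x = 0) :
    ∑ᶠ x ∈ Ici b, f x = ∑ᶠ x ∈ Ioi a, f x := by
  rw [finsum_mem_Ioi_eq_finsum_mem_Ioo_add hf hab, finsum_mem_eq_zero_of_forall_eq_zero h0,
    zero_add]

variable [PartialOrder M] [CanonicallyOrderedAdd M]

theorem finsum_mem_Iic_le_finsum_mem_Iio (hf : (Function.support f).Finite) {a b : α}
    (hab : a < b) : ∑ᶠ x ∈ Iic a, f x ≤ ∑ᶠ x ∈ Iio b, f x := by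
  rw [finsum_mem_Iio_eq_finsum_mem_Iic_add hf hab]
  exact le_self_add

theorem finsum_mem_Ici_le_finsum_mem_Ioi (hf : (Function.support f).Finite) {a b : α}
    (hab : a < b) : ∑ᶠ x ∈ Ici b, f x ≤ ∑ᶠ x ∈ Ioi a, f x := by
  rw [finsum_mem_Ioi_eq_finsum_mem_Ioo_add hf hab]
  exact le_add_self

theorem monotone_finsum_mem_Iic (hf : (Function.support f).Finite) :
    Monotone fun a => ∑ᶠ x ∈ Iic a, f x := by
  intro a b hab
  rcases hab.eq_or_lt with rfl | hlt
  · rfl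
  · calc ∑ᶠ x ∈ Iic a, f x
        ≤ ∑ᶠ x ∈ Iio b, f x := finsum_mem_Iic_le_finsum_mem_Iio hf hlt
      _ ≤ ∑ᶠ x ∈ Iic b, f x := by
        rw [finsum_mem_Iic_eq_finsum_mem_Iio_add hf]
        exact le_self_add

theorem antitone_finsum_mem_Ici (hf : (Function.support f).Finite) :
    Antitone fun a => ∑ᶠ x ∈ Ici a, f x := by
  intro a b hab
  rcases hab.eq_or_lt with rfl | hlt
  · rfl
  · calc ∑ᶠ x ∈ Ici b, f x
        ≤ ∑ᶠ x ∈ Ioi a, f x := finsum_mem_Ici_le_finsum_mem_Ioi hf hlt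
      _ ≤ ∑ᶠ x ∈ Ici a, f x := by
        rw [finsum_mem_Ici_eq_add_finsum_mem_Ioi hf]
        exact le_add_self

end IntervalSums

theorem min_le_min_of_crossing {α β : Type*} [LinearOrder α] [LinearOrder β] {S D : α → β}
    {P : α} {s d : β} (hS : Monotone S) (hD : Antitone D) (hS_lt : ∀ p < P, S p ≤ s)
    (hD_gt : ∀ p, P < p → D p ≤ d) (hs : s ≤ D P) (hd : d ≤ S P) (p : α) :
    min (S p) (D p) ≤ min (S P) (D P) := by
  rcases lt_trichotomy p P with hp | rfl | hp
  · exact le_min ((min_le_left _ _).trans (hS hp.le))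
      ((min_le_left _ _).trans ((hS_lt p hp).trans hs))
  · rfl
  · exact le_min ((min_le_right _ _).trans ((hD_gt p hp).trans hd))
      ((min_le_right _ _).trans (hD hp.le))

section OrderBook

variable {α : Type*} [LinearOrder α] {VB VS : α → ℕ}

structure IsMatching (VB VS VBM VSM : α → ℕ) (pa : α) (Qa : ℕ) : Prop where
  buy_le : ∀ p, VBM p ≤ VB p
  sell_le : ∀ p, VSM p ≤ VS p
  buy_above : ∀ p, pa < p → VBM p = VB p
  buy_below : ∀ p, p < pa → VBM p = 0
  sell_below : ∀ p, p < pa → VSM p = VS p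
  sell_above : ∀ p, pa < p → VSM p = 0
  buy_sum : ∑ᶠ p, VBM p = Qa
  sell_sum : ∑ᶠ p, VSM p = Qa

theorem IsMatching.finsum_mem_Ioi_add_eq_finsum_mem_Iic {VBM VSM : α → ℕ} {pa : α} {Qa : ℕ}
    (hVB : (Function.support VB).Finite) (hVS : (Function.support VS).Finite)
    (hM : IsMatching VB VS VBM VSM pa Qa) :
    ∑ᶠ x ∈ Ioi pa, VB x + ((VS pa - VSM pa) + VBM pa) = ∑ᶠ x ∈ Iic pa, VS x := by
  have hVBM : (Function.support VBM).Finite :=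
    hVB.subset fun x hx => ((Nat.pos_of_ne_zero hx).trans_le (hM.buy_le x)).ne'
  have hVSM : (Function.support VSM).Finite :=
    hVS.subset fun x hx => ((Nat.pos_of_ne_zero hx).trans_le (hM.sell_le x)).ne'
  have hbuy : Qa = VBM pa + ∑ᶠ x ∈ Ioi pa, VB x := by
    rw [← hM.buy_sum, finsum_eq_finsum_mem_Iio_add_add_finsum_mem_Ioi hVBM pa,
      finsum_mem_eq_zero_of_forall_eq_zero (s := Iio pa) hM.buy_below, zero_add,
      finsum_mem_congr (s := Ioi pa) rfl hM.buy_above]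
  have hsell : Qa = ∑ᶠ x ∈ Iio pa, VS x + VSM pa := by
    rw [← hM.sell_sum, finsum_eq_finsum_mem_Iio_add_add_finsum_mem_Ioi hVSM pa,
      finsum_mem_eq_zero_of_forall_eq_zero (s := Ioi pa) hM.sell_above, add_zero,
      finsum_mem_congr (s := Iio pa) rfl hM.sell_below]
  have hsupply := finsum_mem_Iic_eq_finsum_mem_Iio_add hVS pa
  have := hM.sell_le pa
  omega

theorem finsum_mem_Ici_add_eq_finsum_mem_Iio_of_gap (hVB : (Function.support VB).Finite)
    (hVS : (Function.support VS).Finite) {a b : α} (hab : a < b)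
    (hgap : ∀ p, a < p → p < b → VB p + VS p = 0) {r : ℕ}
    (h : ∑ᶠ x ∈ Ioi a, VB x + r = ∑ᶠ x ∈ Iic a, VS x) :
    ∑ᶠ x ∈ Ici b, VB x + r = ∑ᶠ x ∈ Iio b, VS x := by
  rwa [finsum_mem_Ici_eq_finsum_mem_Ioi_of_Ioo hVB hab
      fun p hp => Nat.eq_zero_of_add_eq_zero_right (hgap p hp.1 hp.2),
    finsum_mem_Iio_eq_finsum_mem_Iic_of_Ioo hVS hab
      fun p hp => Nat.eq_zero_of_add_eq_zero_left (hgap p hp.1 hp.2)]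

theorem finsum_mem_Ioi_add_add_eq_finsum_mem_Iic (hVB : (Function.support VB).Finite)
    (hVS : (Function.support VS).Finite) {b : α} {r : ℕ}
    (h : ∑ᶠ x ∈ Ici b, VB x + r = ∑ᶠ x ∈ Iio b, VS x) :
    ∑ᶠ x ∈ Ioi b, VB x + (r + VS b + VB b) = ∑ᶠ x ∈ Iic b, VS x := by
  rw [finsum_mem_Ici_eq_add_finsum_mem_Ioi hVB] at h
  rw [finsum_mem_Iic_eq_finsum_mem_Iio_add hVS]
  omega

theorem finsum_mem_Ici_add_eq_finsum_mem_Iio_of_consecutive (hVB : (Function.support VB).Finite)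
    (hVS : (Function.support VS).Finite) {pa : α} {n : ℕ} {pB : ℕ → α} {qB : ℕ → ℕ}
    (h0 : ∑ᶠ x ∈ Ioi pa, VB x + qB 0 = ∑ᶠ x ∈ Iic pa, VS x)
    (hpB1 : 1 ≤ n → pa < pB 1)
    (hpBmono : ∀ k : ℕ, 1 ≤ k → k + 1 ≤ n → pB k < pB (k + 1))
    (hgap0 : 1 ≤ n → ∀ p, pa < p → p < pB 1 → VB p + VS p = 0)
    (hgap : ∀ k : ℕ, 1 ≤ k → k + 1 ≤ n →
      ∀ p, pB k < p → p < pB (k + 1) → VB p + VS p = 0)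
    (hqBrec : ∀ k : ℕ, 1 ≤ k → k ≤ n → qB k = qB (k - 1) + VS (pB k) + VB (pB k))
    (k : ℕ) (hk : 1 ≤ k) (hkn : k ≤ n) :
    ∑ᶠ x ∈ Ici (pB k), VB x + qB (k - 1) = ∑ᶠ x ∈ Iio (pB k), VS x := by
  induction k, hk using Nat.le_induction with
  | base => exact finsum_mem_Ici_add_eq_finsum_mem_Iio_of_gap hVB hVS (hpB1 hkn) (hgap0 hkn) h0
  | succ k hk ih =>
    have hbalance := finsum_mem_Ioi_add_add_eq_finsum_mem_Iic hVB hVS (ih (by omega))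
    rw [← hqBrec k hk (by omega)] at hbalance
    exact finsum_mem_Ici_add_eq_finsum_mem_Iio_of_gap hVB hVS (hpBmono k hk hkn)
      (hgap k hk hkn) hbalance

end OrderBook

theorem buy_order_impact_discontinuities_general
    (VB VS VBM VSM : ℝ → ℕ)
    (hVB : (Function.support VB).Finite)
    (hVS : (Function.support VS).Finite)
    (S D : ℝ → ℕ)
    (hS : ∀ p : ℝ, S p = ∑ᶠ p' ∈ {p' : ℝ | p' ≤ p}, VS p')
    (hD : ∀ p : ℝ, D p = ∑ᶠ p' ∈ {p' : ℝ | p ≤ p'}, VB p')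
    (pa : ℝ) (Qa : ℕ)
    (hBMle : ∀ p : ℝ, VBM p ≤ VB p)
    (hSMle : ∀ p : ℝ, VSM p ≤ VS p)
    (hBMabove : ∀ p : ℝ, pa < p → VBM p = VB p)
    (hBMbelow : ∀ p : ℝ, p < pa → VBM p = 0)
    (hSMbelow : ∀ p : ℝ, p < pa → VSM p = VS p)
    (hSMabove : ∀ p : ℝ, pa < p → VSM p = 0)
    (hBMsum : (∑ᶠ p : ℝ, VBM p) = Qa)
    (hSMsum : (∑ᶠ p : ℝ, VSM p) = Qa)
    (n : ℕ) (pB : ℕ → ℝ)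
    (hpBgt : ∀ k : ℕ, 1 ≤ k → k ≤ n → pa < pB k)
    (hpBmono : ∀ k : ℕ, 1 ≤ k → k + 1 ≤ n → pB k < pB (k + 1))
    (hgap0 : 1 ≤ n → ∀ p : ℝ, pa < p → p < pB 1 → VB p + VS p = 0)
    (hgap : ∀ k : ℕ, 1 ≤ k → k + 1 ≤ n →
      ∀ p : ℝ, pB k < p → p < pB (k + 1) → VB p + VS p = 0)
    (qB : ℕ → ℕ)
    (hqB0 : qB 0 = (VS pa - VSM pa) + VBM pa)
    (hqBrec : ∀ k : ℕ, 1 ≤ k → k ≤ n →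
      qB k = qB (k - 1) + VS (pB k) + VB (pB k)) :
    ∀ i : ℕ, 1 ≤ i → i ≤ n →
      ∀ q : ℕ, qB (i - 1) ≤ q → q ≤ qB i →
        ∀ p : ℝ, min (S p) (D p + q) ≤ min (S (pB i)) (D (pB i) + q) := by
  intro i hi hin q hq₁ hq₂
  obtain rfl : S = fun p => ∑ᶠ x ∈ Iic p, VS x := funext hS
  obtain rfl : D = fun p => ∑ᶠ x ∈ Ici p, VB x := funext hD
  have hM : IsMatching VB VS VBM VSM pa Qa :=
    ⟨hBMle, hSMle, hBMabove, hBMbelow, hSMbelow, hSMabove, hBMsum, hSMsum⟩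
  have h0 := hM.finsum_mem_Ioi_add_eq_finsum_mem_Iic hVB hVS
  rw [← hqB0] at h0
  have hbelow := finsum_mem_Ici_add_eq_finsum_mem_Iio_of_consecutive hVB hVS h0 (hpBgt 1 le_rfl)
    hpBmono hgap0 hgap hqBrec i hi hin
  have habove := finsum_mem_Ioi_add_add_eq_finsum_mem_Iic hVB hVS hbelow
  rw [← hqBrec i hi hin] at habove
  exact min_le_min_of_crossing (D := fun p => ∑ᶠ x ∈ Ici p, VB x + q)
    (s := ∑ᶠ x ∈ Iio (pB i), VS x) (d := ∑ᶠ x ∈ Ioi (pB i), VB x + q)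
    (monotone_finsum_mem_Iic hVS) ((antitone_finsum_mem_Ici hVB).add_const q)
    (fun p hp => finsum_mem_Iic_le_finsum_mem_Iio hVS hp)
    (fun p hp => Nat.add_le_add_right (finsum_mem_Ici_le_finsum_mem_Ioi hVB hp) q)
    (by omega) (by omega)

/-- Let `pB 1 < pB 2 < … < pB n` be the successive prices
strictly greater than `pa` carrying positive posted volume, and let
`qB 0 = V_S^R(pa) + V_B^M(pa)` and `qB k = qB (k−1) + V_S(pB k) + V_B(pB k)`
for `1 ≤ k ≤ n`.  Then for every `1 ≤ i ≤ n` and every buy market order size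
`q` with `qB (i−1) ≤ q ≤ qB i`, the price `pB i` maximizes the new exchanged
volume `p ↦ min (S p) (D p + q)`: the new auction price is `pB i`. -/
theorem buy_order_impact_discontinuities
    (VB VS VBM VSM : ℝ → ℕ)
    (hVB : (Function.support VB).Finite)
    (hVS : (Function.support VS).Finite)
    (S D : ℝ → ℕ)
    (hS : ∀ p : ℝ, S p = ∑ᶠ p' ∈ {p' : ℝ | p' ≤ p}, VS p')
    (hD : ∀ p : ℝ, D p = ∑ᶠ p' ∈ {p' : ℝ | p ≤ p'}, VB p')
    (pa : ℝ) (Qa : ℕ)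
    (hmax : ∀ p : ℝ, min (S p) (D p) ≤ min (S pa) (D pa))
    (hQa : Qa = min (S pa) (D pa))
    (hBMle : ∀ p : ℝ, VBM p ≤ VB p)
    (hSMle : ∀ p : ℝ, VSM p ≤ VS p)
    (hBMabove : ∀ p : ℝ, pa < p → VBM p = VB p)
    (hBMbelow : ∀ p : ℝ, p < pa → VBM p = 0)
    (hSMbelow : ∀ p : ℝ, p < pa → VSM p = VS p)
    (hSMabove : ∀ p : ℝ, pa < p → VSM p = 0)
    (hBMsum : (∑ᶠ p : ℝ, VBM p) = Qa)
    (hSMsum : (∑ᶠ p : ℝ, VSM p) = Qa)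
    (n : ℕ) (pB : ℕ → ℝ)
    (hpBgt : ∀ k : ℕ, 1 ≤ k → k ≤ n → pa < pB k)
    (hpBmono : ∀ k : ℕ, 1 ≤ k → k + 1 ≤ n → pB k < pB (k + 1))
    (hpBpos : ∀ k : ℕ, 1 ≤ k → k ≤ n → 0 < VB (pB k) + VS (pB k))
    (hgap0 : 1 ≤ n → ∀ p : ℝ, pa < p → p < pB 1 → VB p + VS p = 0)
    (hgap : ∀ k : ℕ, 1 ≤ k → k + 1 ≤ n →
      ∀ p : ℝ, pB k < p → p < pB (k + 1) → VB p + VS p = 0)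
    (qB : ℕ → ℕ)
    (hqB0 : qB 0 = (VS pa - VSM pa) + VBM pa)
    (hqBrec : ∀ k : ℕ, 1 ≤ k → k ≤ n →
      qB k = qB (k - 1) + VS (pB k) + VB (pB k)) :
    ∀ i : ℕ, 1 ≤ i → i ≤ n →
      ∀ q : ℕ, qB (i - 1) ≤ q → q ≤ qB i →
        ∀ p : ℝ, min (S p) (D p + q) ≤ min (S (pB i)) (D (pB i) + q) :=
  buy_order_impact_discontinuities_general VB VS VBM VSM hVB hVS S D hS hD pa Qa hBMle hSMle
    hBMabove hBMbelow hSMbelow hSMabove hBMsum hSMsum n pB hpBgt hpBmono hgap0 hgap qB hqB0 hqBrec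
end
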